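/- Let $F:\mathbb{H}\to\mathbb{C}$ be a function on the upper half-plane satisfying $|F(Z)-Z-1|< u(\mathrm{Re}(Z))$ for all $Z\in\mathbb{H}$, where $u:\mathbb{R}\to(0,1/10)$ is a function such that $\log u$ is $1/2$-Lipschitz. Let $U:\mathbb{R}\to\mathbb{R}$ be an antiderivative of $-2u$. Then for every $Z=X+iY\in\mathbb{H}$ with $Y> U(X)$, the point $F(Z)=X'+iY'$ satisfies $Y'>U(X')$. -/

import Mathlib

lemma exp_eleven_twenty_lt : Real.exp (11/20) < 9/5 := by
  have h1 : Real.exp 1 < 2.7182818286 := Real.exp_one_lt_d9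
  have h2 : Real.exp (11/20 : ℝ) ^ 20 = Real.exp 1 ^ 11 := by
    rw [← Real.exp_nat_mul, ← Real.exp_nat_mul]; norm_num
  have h3 : Real.exp 1 ^ 11 < 2.7182818286 ^ 11 :=
    pow_lt_pow_left₀ h1 (Real.exp_pos 1).le (by norm_num)
  have h4 : (2.7182818286:ℝ) ^ 11 < (9/5) ^ 20 := by norm_num
  have h5 : Real.exp (11/20 : ℝ) ^ 20 < (9/5:ℝ) ^ 20 := by
    rw [h2]; linarith
  exact lt_of_pow_lt_pow_left₀ 20 (by norm_num) h5

/-- If `|F(Z)-Z-1| < u(Re Z)` on the upper half-plane, with `u : ℝ → (0,1/10)` such that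
`log u` is 1/2-Lipschitz, and `U` is an antiderivative of `-2u`, then any point of the upper
half-plane above the graph of `U` has its image above the graph of `U`. -/
theorem statement0 (F : ℂ → ℂ) (u U : ℝ → ℝ)
    (hu : ∀ x, u x ∈ Set.Ioo (0 : ℝ) (1 / 10))
    (hlip : ∀ x y, |Real.log (u x) - Real.log (u y)| ≤ (1 / 2) * |x - y|)
    (hU : ∀ x, HasDerivAt U (-2 * u x) x)
    (hF : ∀ Z : ℂ, 0 < Z.im → ‖F Z - Z - 1‖ < u Z.re) :
    ∀ Z : ℂ, 0 < Z.im → U Z.re < Z.im → U (F Z).re < (F Z).im := by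
  intro Z hZ hUZ
  set X := Z.re with hX
  set Y := Z.im with hY
  set X' := (F Z).re with hX'
  set Y' := (F Z).im with hY'
  have huX := hu X
  have hab := hF Z hZ
  have hre : |X' - X - 1| < u X := by
    have h := (Complex.abs_re_le_norm (F Z - Z - 1)).trans_lt hab
    simpa using h
  have him : |Y' - Y| < u X := by
    have h := (Complex.abs_im_le_norm (F Z - Z - 1)).trans_lt hab
    simpa using h
  obtain ⟨hre1, hre2⟩ := abs_lt.mp hre
  obtain ⟨him1, him2⟩ := abs_lt.mp him
  have hXX' : X + 9/10 < X' := by linarith [huX.2]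
  have hX'X : X' ≤ X + 11/10 := by linarith [huX.2]
  set c : ℝ := Real.exp (Real.log (u X) - 11/20) with hc
  have hcpos : 0 < c := Real.exp_pos _
  have hcle : ∀ t ∈ Set.Icc X X', c ≤ u t := by
    intro t ht
    have h1 := hlip t X
    have ht' : |t - X| ≤ 11/10 := by
      rw [abs_le]; constructor
      · linarith [ht.1]
      · linarith [ht.2]
    have h2 : Real.log (u X) - 11/20 ≤ Real.log (u t) := by
      have := (abs_le.mp h1).1
      linarith
    calc c ≤ Real.exp (Real.log (u t)) := Real.exp_le_exp.mpr h2
      _ = u t := Real.exp_log (hu t).1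
  -- c is comparable to u X
  have hcval : c = u X * (Real.exp (11/20))⁻¹ := by
    rw [hc, Real.exp_sub, Real.exp_log huX.1, div_eq_mul_inv]
  have hcgt : (9/5) * c > u X := by
    have h1 : (Real.exp (11/20))⁻¹ > 5/9 := by
      have h2 := exp_eleven_twenty_lt
      have h4 : (0:ℝ) < Real.exp (11/20) := Real.exp_pos _
      rw [gt_iff_lt, lt_inv_comm₀ (by norm_num) h4]
      linarith
    rw [hcval]
    nlinarith [huX.1]
  -- monotonicity of g t = U t + 2 c t on [X, X']
  set g : ℝ → ℝ := fun t => U t + 2 * c * t with hg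
  have hgd : ∀ t, HasDerivAt g (-2 * u t + 2 * c) t := by
    intro t
    have h1 : HasDerivAt (fun y : ℝ => 2 * c * y) (2 * c) t := by
      simpa using (hasDerivAt_id t).const_mul (2 * c)
    exact (hU t).add h1
  have hanti : AntitoneOn g (Set.Icc X X') := by
    apply antitoneOn_of_deriv_nonpos (convex_Icc X X')
    · exact (Differentiable.continuous (fun t => (hgd t).differentiableAt)).continuousOn
    · exact fun t _ => ((hgd t).differentiableAt).differentiableWithinAt
    · intro t ht
      rw [(hgd t).deriv]
      have htIcc : t ∈ Set.Icc X X' := interior_subset ht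
      have := hcle t htIcc
      linarith
  have hle : X ≤ X' := by linarith
  have hkey : g X' ≤ g X :=
    hanti (Set.left_mem_Icc.mpr hle) (Set.right_mem_Icc.mpr hle) hle
  have hUX' : U X' ≤ U X - 2 * c * (X' - X) := by
    simp only [hg] at hkey
    linarith
  -- conclude
  have h2c : 2 * c * (X' - X) > (9/5) * c := by nlinarith
  linarith
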